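/- arXiv:0904.0160 — 2 statements merged into one kernel-verified Lean document; each statement's English description precedes it below -/
import Mathlib

section
/- Let A, B be bounded linear operators on a Banach space and define the second splitting iterate c₂(τ) = exp(τB)c₀ + ∫₀^τ exp((τ−s)B) A exp(sA) c₀ ds. Then ‖exp(τ(A+B))c₀ − c₂(τ)‖ ≤ C τ² ‖c₀‖ for all τ ∈ [0,1], where C depends only on ‖A‖ and ‖B‖. -/
/-!
To first order `exp (τ (A + B)) = 1 + τ (A + B) + O(τ²)`, `exp (τ B) = 1 + τ B + O(τ²)`, and
the integrand `exp ((τ - s) B) A exp (s A)` is `A + O(τ)` for `s ∈ [0, τ]`; the first-order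
terms cancel, leaving `O(τ²)`. Every remainder is controlled by the tail estimate
`‖exp x - ∑_{i<k} xⁱ / i!‖ ≤ ‖x‖ᵏ e^‖x‖`, valid in any Banach algebra with `‖1‖ ≤ 1`.
-/

open NormedSpace intervalIntegral
open scoped Nat

lemma norm_pow_le_of_norm_one_le {𝔸 : Type*} [NormedRing 𝔸] (h1 : ‖(1 : 𝔸)‖ ≤ 1) (x : 𝔸) :
    ∀ n : ℕ, ‖x ^ n‖ ≤ ‖x‖ ^ n
  | 0 => by simpa using h1
  | n + 1 => norm_pow_le' x n.succ_pos

section BanachAlgebra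

variable {𝔸 : Type*} [NormedRing 𝔸] [NormedAlgebra ℝ 𝔸] [CompleteSpace 𝔸]

lemma norm_exp_sub_sum_range_le (h1 : ‖(1 : 𝔸)‖ ≤ 1) (x : 𝔸) (k : ℕ) :
    ‖exp x - ∑ i ∈ Finset.range k, (i !⁻¹ : ℝ) • x ^ i‖ ≤ ‖x‖ ^ k * Real.exp ‖x‖ := by
  have htail : HasSum (fun n ↦ ((n + k)!⁻¹ : ℝ) • x ^ (n + k))
      (exp x - ∑ i ∈ Finset.range k, (i !⁻¹ : ℝ) • x ^ i) :=
    (hasSum_nat_add_iff' k).mpr (exp_series_hasSum_exp' x)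
  have hmajorant : HasSum (fun n ↦ ‖x‖ ^ k * (‖x‖ ^ n / n !)) (‖x‖ ^ k * Real.exp ‖x‖) := by
    rw [Real.exp_eq_exp_ℝ]
    exact (expSeries_div_hasSum_exp ‖x‖).mul_left _
  refine htail.norm_le_of_bounded hmajorant fun n ↦ ?_
  rw [norm_smul_of_nonneg (by positivity)]
  calc ((n + k)!⁻¹ : ℝ) * ‖x ^ (n + k)‖ ≤ (n !⁻¹ : ℝ) * ‖x‖ ^ (n + k) := by
        gcongr
        · exact Nat.le_add_right n k
        · exact norm_pow_le_of_norm_one_le h1 x _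
    _ = ‖x‖ ^ k * (‖x‖ ^ n / n !) := by rw [pow_add]; ring

lemma norm_exp_le (h1 : ‖(1 : 𝔸)‖ ≤ 1) (x : 𝔸) : ‖exp x‖ ≤ Real.exp ‖x‖ := by
  simpa using norm_exp_sub_sum_range_le h1 x 0

lemma norm_exp_sub_one_le (h1 : ‖(1 : 𝔸)‖ ≤ 1) (x : 𝔸) :
    ‖exp x - 1‖ ≤ ‖x‖ * Real.exp ‖x‖ := by
  simpa using norm_exp_sub_sum_range_le h1 x 1

lemma norm_exp_sub_one_sub_le (h1 : ‖(1 : 𝔸)‖ ≤ 1) (x : 𝔸) :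
    ‖exp x - 1 - x‖ ≤ ‖x‖ ^ 2 * Real.exp ‖x‖ := by
  simpa [Finset.sum_range_succ, sub_sub] using norm_exp_sub_sum_range_le h1 x 2

lemma norm_exp_smul_mul_mul_exp_smul_sub_le (h1 : ‖(1 : 𝔸)‖ ≤ 1) (a b : 𝔸) {s t : ℝ}
    (hs : 0 ≤ s) (ht : 0 ≤ t) :
    ‖exp (t • b) * a * exp (s • a) - a‖ ≤
      ‖a‖ * (s * ‖a‖ + t * ‖b‖) * Real.exp (s * ‖a‖ + t * ‖b‖) := by
  have hB := norm_exp_sub_one_le h1 (t • b)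
  have hA := norm_exp_sub_one_le h1 (s • a)
  have hA' := norm_exp_le h1 (s • a)
  rw [norm_smul_of_nonneg ht] at hB
  rw [norm_smul_of_nonneg hs] at hA hA'
  have hexp_le : Real.exp (s * ‖a‖) ≤ Real.exp (s * ‖a‖ + t * ‖b‖) :=
    Real.exp_le_exp.mpr (le_add_of_nonneg_right (by positivity))
  calc ‖exp (t • b) * a * exp (s • a) - a‖
      = ‖(exp (t • b) - 1) * a * exp (s • a) + a * (exp (s • a) - 1)‖ := by
        congr 1; noncomm_ring
    _ ≤ ‖exp (t • b) - 1‖ * ‖a‖ * ‖exp (s • a)‖ + ‖a‖ * ‖exp (s • a) - 1‖ :=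
        (norm_add_le _ _).trans (add_le_add (norm_mul₃_le ..) (norm_mul_le _ _))
    _ ≤ t * ‖b‖ * Real.exp (t * ‖b‖) * ‖a‖ * Real.exp (s * ‖a‖) +
          ‖a‖ * (s * ‖a‖ * Real.exp (s * ‖a‖)) := by gcongr
    _ ≤ ‖a‖ * (s * ‖a‖ + t * ‖b‖) * Real.exp (s * ‖a‖ + t * ‖b‖) := by
        have hfirst : t * ‖b‖ * Real.exp (t * ‖b‖) * ‖a‖ * Real.exp (s * ‖a‖) =
            ‖a‖ * (t * ‖b‖) * Real.exp (s * ‖a‖ + t * ‖b‖) := by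
          rw [Real.exp_add]; ring
        have hsecond := mul_le_mul_of_nonneg_left hexp_le (by positivity : 0 ≤ ‖a‖ * (s * ‖a‖))
        linarith

lemma continuous_exp_smul_mul_mul_exp_smul (a b : 𝔸) (τ : ℝ) :
    Continuous fun s : ℝ ↦ exp ((τ - s) • b) * a * exp (s • a) := by
  have hexp : Continuous (exp : 𝔸 → 𝔸) :=
    continuous_iff_continuousAt.2 fun x ↦ (exp_analytic (𝕂 := ℝ) x).continuousAt
  fun_prop

/-- Operator form of the second iterate: `c₂(τ) = splittingSecondIterate A B τ c₀`. -/
noncomputable def splittingSecondIterate (a b : 𝔸) (τ : ℝ) : 𝔸 :=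
  exp (τ • b) + ∫ s in (0 : ℝ)..τ, exp ((τ - s) • b) * a * exp (s • a)

theorem norm_exp_smul_add_sub_splittingSecondIterate_le (h1 : ‖(1 : 𝔸)‖ ≤ 1) (a b : 𝔸)
    {τ : ℝ} (hτ : 0 ≤ τ) :
    ‖exp (τ • (a + b)) - splittingSecondIterate a b τ‖ ≤
      2 * (‖a‖ + ‖b‖) ^ 2 * τ ^ 2 * Real.exp (τ * (‖a‖ + ‖b‖)) := by
  set K := ‖a‖ + ‖b‖
  set E := fun s : ℝ ↦ exp ((τ - s) • b) * a * exp (s • a)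
  have hE : IntervalIntegrable E MeasureTheory.volume 0 τ :=
    (continuous_exp_smul_mul_mul_exp_smul a b τ).intervalIntegrable _ _
  -- The first-order terms `τ (a + b)`, `τ b` and `∫₀^τ a` cancel.
  have hsplit : exp (τ • (a + b)) - splittingSecondIterate a b τ =
      (exp (τ • (a + b)) - 1 - τ • (a + b)) - (exp (τ • b) - 1 - τ • b) -
        ∫ s in (0 : ℝ)..τ, (E s - a) := by
    rw [integral_sub hE intervalIntegrable_const, integral_const, sub_zero,
      splittingSecondIterate, smul_add]
    abel
  have hsum : ‖τ • (a + b)‖ ≤ τ * K := by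
    rw [norm_smul_of_nonneg hτ]; gcongr; exact norm_add_le a b
  have hfull : ‖exp (τ • (a + b)) - 1 - τ • (a + b)‖ ≤ (τ * K) ^ 2 * Real.exp (τ * K) :=
    (norm_exp_sub_one_sub_le h1 _).trans (by gcongr)
  have hB : ‖exp (τ • b) - 1 - τ • b‖ ≤ (τ * ‖b‖) ^ 2 * Real.exp (τ * K) := by
    refine (norm_exp_sub_one_sub_le h1 _).trans ?_
    rw [norm_smul_of_nonneg hτ]
    gcongr
    exact le_add_of_nonneg_left (norm_nonneg a)
  have hintegrand : ∀ s ∈ Set.uIoc 0 τ, ‖E s - a‖ ≤ ‖a‖ * (τ * K) * Real.exp (τ * K) := by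
    intro s hs
    obtain ⟨hs0, hsτ⟩ := Set.uIoc_of_le hτ ▸ hs
    have hτs : 0 ≤ τ - s := sub_nonneg.2 hsτ
    have hu : s * ‖a‖ + (τ - s) * ‖b‖ ≤ τ * K := by
      have := mul_le_mul_of_nonneg_right hsτ (norm_nonneg a)
      have := mul_le_mul_of_nonneg_right (sub_le_self τ hs0.le) (norm_nonneg b)
      linarith
    refine (norm_exp_smul_mul_mul_exp_smul_sub_le h1 a b hs0.le hτs).trans ?_
    have : 0 ≤ s * ‖a‖ + (τ - s) * ‖b‖ := by positivity
    gcongr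
  have hintegral : ‖∫ s in (0 : ℝ)..τ, (E s - a)‖ ≤ ‖a‖ * (τ * K) * Real.exp (τ * K) * τ := by
    simpa [abs_of_nonneg hτ] using norm_integral_le_of_norm_le_const hintegrand
  rw [hsplit]
  refine (norm_sub_le _ _).trans ((add_le_add (norm_sub_le _ _) hintegral).trans ?_)
  have hK : ‖b‖ ^ 2 + ‖a‖ * K ≤ K ^ 2 := by nlinarith [norm_nonneg a, norm_nonneg b]
  have := Real.exp_pos (τ * K)
  nlinarith [mul_le_mul_of_nonneg_right hK (by positivity : 0 ≤ τ ^ 2 * Real.exp (τ * K))]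

end BanachAlgebra

/-- Second-iterate error bound: for
`c₂(τ) = exp(τB)c₀ + ∫₀^τ exp((τ−s)B) A exp(sA) c₀ ds` one has
`‖exp(τ(A+B))c₀ − c₂(τ)‖ ≤ C τ² ‖c₀‖` for all `τ ∈ [0,1]`, with `C` depending
only on `‖A‖` and `‖B‖`. -/
theorem second_iterate_error {X : Type*} [NormedAddCommGroup X] [NormedSpace ℝ X]
    [CompleteSpace X] (A B : X →L[ℝ] X) :
    ∃ C : ℝ, 0 ≤ C ∧ ∀ c₀ : X, ∀ τ : ℝ, 0 ≤ τ → τ ≤ 1 →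
      ‖(NormedSpace.exp (τ • (A + B))) c₀ -
          ((NormedSpace.exp (τ • B)) c₀ +
            ∫ s in (0:ℝ)..τ,
              (NormedSpace.exp ((τ - s) • B)) (A ((NormedSpace.exp (s • A)) c₀)))‖ ≤
        C * τ ^ 2 * ‖c₀‖ := by
  set K := ‖A‖ + ‖B‖
  refine ⟨2 * K ^ 2 * Real.exp K, by positivity, fun c₀ τ hτ0 hτ1 ↦ ?_⟩
  have hc₂ : exp (τ • B) c₀ + ∫ s in (0 : ℝ)..τ, exp ((τ - s) • B) (A (exp (s • A) c₀)) =
      splittingSecondIterate A B τ c₀ := by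
    rw [splittingSecondIterate, add_apply,
      ContinuousLinearMap.intervalIntegral_apply
        ((continuous_exp_smul_mul_mul_exp_smul A B τ).intervalIntegrable _ _)]
    rfl
  have hop := norm_exp_smul_add_sub_splittingSecondIterate_le
    ContinuousLinearMap.norm_id_le A B hτ0
  rw [hc₂, ← sub_apply]
  refine (ContinuousLinearMap.le_opNorm _ c₀).trans ?_
  have hexp : Real.exp (τ * K) ≤ Real.exp K :=
    Real.exp_le_exp.2 (mul_le_of_le_one_left (by positivity) hτ1)
  calc _ ≤ 2 * K ^ 2 * τ ^ 2 * Real.exp (τ * K) * ‖c₀‖ := by gcongr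
    _ ≤ 2 * K ^ 2 * Real.exp K * τ ^ 2 * ‖c₀‖ := by
        rw [mul_right_comm _ (Real.exp K)]; gcongr
end

section
/- Let A, B be bounded linear operators on a Banach space X. Define the iterative splitting sequence on [0,τ]: c₁(t) = exp(tA)c₀, and for i ≥ 2, c_i(t) = exp(tD_i)c₀ + ∫₀ᵗ exp((t−s)D_i) E_i c_{i−1}(s) ds, where (D_i,E_i) = (B,A) for even i and (A,B) for odd i. Then for every i ≥ 1 there is a constant C_i depending only on ‖A‖, ‖B‖ such that ‖c_i(τ) − exp(τ(A+B))c₀‖ ≤ C_i τ^i ‖c₀‖ for all τ ∈ [0,1]. -/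
/-!
The exact solution `u(t) = exp(t(A+B))c₀` obeys the same variation-of-constants recursion as the
iterates, with any splitting `(D, E)` of `A + B`. Subtracting, the error of `c_i` is
`∫₀ᵗ exp((t-s)D_i) E_i (c_{i-1}(s) - u(s)) ds`, so each sweep multiplies the error bound by
`e^{‖D_i‖} ‖E_i‖ τ`. The first iterate is one sweep applied to `c_0 = 0`, whose error
`‖u(s)‖ ≤ e^{‖A+B‖} ‖c₀‖` is of order `τ⁰`.
-/

open NormedSpace intervalIntegral Set

@[fun_prop]
theorem Continuous.exp_smul_const {α 𝔸 : Type*} [TopologicalSpace α] [NormedRing 𝔸]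
    [NormedAlgebra ℝ 𝔸] [CompleteSpace 𝔸] {f : α → ℝ} (hf : Continuous f) (x : 𝔸) :
    Continuous fun t => exp (f t • x) :=
  (differentiable_exp_smul_const ℝ x).continuous.comp hf

section Operators

variable {X : Type*} [NormedAddCommGroup X] [NormedSpace ℝ X]

theorem norm_exp_le_exp_norm (M : X →L[ℝ] X) : ‖exp M‖ ≤ Real.exp ‖M‖ := by
  rw [exp_eq_tsum ℝ, Real.exp_eq_exp_ℝ, exp_eq_tsum ℝ]
  refine (norm_tsum_le_tsum_norm (norm_expSeries_summable' M)).trans <|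
    Summable.tsum_le_tsum (fun n => ?_) (norm_expSeries_summable' M)
      (expSeries_summable' (𝕂 := ℝ) ‖M‖)
  rw [norm_smul, norm_inv, Real.norm_natCast, smul_eq_mul]
  gcongr
  rcases n with _ | n
  · simpa [ContinuousLinearMap.one_def] using ContinuousLinearMap.norm_id_le
  · exact norm_pow_le' M n.succ_pos

theorem norm_exp_smul_apply_le (M : X →L[ℝ] X) {r : ℝ} (hr : |r| ≤ 1) (x : X) :
    ‖exp (r • M) x‖ ≤ Real.exp ‖M‖ * ‖x‖ := by
  have hrM : ‖r • M‖ ≤ ‖M‖ := by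
    rw [norm_smul, Real.norm_eq_abs]
    exact mul_le_of_le_one_left (norm_nonneg M) hr
  calc ‖exp (r • M) x‖ ≤ ‖exp (r • M)‖ * ‖x‖ := (exp (r • M)).le_opNorm x
    _ ≤ Real.exp ‖M‖ * ‖x‖ := by
      gcongr
      exact (norm_exp_le_exp_norm _).trans (Real.exp_le_exp.2 hrM)

end Operators

theorem norm_integral_le_mul_pow {E : Type*} [NormedAddCommGroup E] [NormedSpace ℝ E]
    {f : ℝ → E} {K τ : ℝ} {n : ℕ} (hτ : 0 ≤ τ) (hf : ∀ s ∈ Ioc 0 τ, ‖f s‖ ≤ K * s ^ n) :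
    ‖∫ s in (0:ℝ)..τ, f s‖ ≤ K * (τ ^ (n + 1) / (n + 1)) := by
  calc ‖∫ s in (0:ℝ)..τ, f s‖ ≤ ∫ s in (0:ℝ)..τ, K * s ^ n :=
        norm_integral_le_of_norm_le hτ (.of_forall hf)
          ((by fun_prop : Continuous _).intervalIntegrable _ _)
    _ = K * (τ ^ (n + 1) / (n + 1)) := by simp [integral_pow]

section Splitting

variable {X : Type*} [NormedAddCommGroup X] [NormedSpace ℝ X] [CompleteSpace X]
  (M N : X →L[ℝ] X) (c₀ : X)

noncomputable def splittingStep (v : ℝ → X) (t : ℝ) : X :=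
  exp (t • M) c₀ + ∫ s in (0:ℝ)..t, exp ((t - s) • M) (N (v s))

variable {M N c₀}

theorem continuous_splittingStep {v : ℝ → X} (hv : Continuous v) :
    Continuous (splittingStep M N c₀ v) := by
  unfold splittingStep
  fun_prop

theorem splittingStep_exp_smul_add (t : ℝ) :
    splittingStep M N c₀ (fun s => exp (s • (M + N)) c₀) t = exp (t • (M + N)) c₀ := by
  -- the `M`-terms cancel in the derivative of `s ↦ exp((t-s)M) exp(s(M+N))`
  have hderiv : ∀ s, HasDerivAt (fun s : ℝ => (exp ((t - s) • M) * exp (s • (M + N))) c₀)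
      (exp ((t - s) • M) (N (exp (s • (M + N)) c₀))) s := by
    intro s
    have h₁ : HasDerivAt (fun s : ℝ => exp ((t - s) • M)) (-(exp ((t - s) • M) * M)) s := by
      have h := (hasDerivAt_exp_smul_const M (t - s)).scomp s ((hasDerivAt_id s).const_sub t)
      simp only [neg_smul, one_smul] at h
      exact h
    have h₂ := hasDerivAt_exp_smul_const' (𝕂 := ℝ) (M + N) s
    have h : HasDerivAt (fun s : ℝ => exp ((t - s) • M) * exp (s • (M + N)))
        (exp ((t - s) • M) * (N * exp (s • (M + N)))) s :=
      (h₁.mul h₂).congr_deriv (by noncomm_ring)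
    simpa using h.clm_apply (hasDerivAt_const s c₀)
  have hFTC := integral_eq_sub_of_hasDerivAt (fun s _ => hderiv s)
    ((by fun_prop : Continuous _).intervalIntegrable 0 t)
  rw [splittingStep, hFTC]
  simp

theorem splittingStep_sub_splittingStep {v w : ℝ → X} (hv : Continuous v) (hw : Continuous w)
    (t : ℝ) :
    splittingStep M N c₀ v t - splittingStep M N c₀ w t =
      ∫ s in (0:ℝ)..t, exp ((t - s) • M) (N (v s - w s)) := by
  simp only [splittingStep, map_sub]
  rw [integral_sub ((by fun_prop : Continuous _).intervalIntegrable _ _)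
    ((by fun_prop : Continuous _).intervalIntegrable _ _)]
  abel

theorem norm_splittingStep_sub_exp_le {v : ℝ → X} (hv : Continuous v) {C : ℝ} (hC : 0 ≤ C)
    {n : ℕ} (hvC : ∀ s, 0 ≤ s → s ≤ 1 → ‖v s - exp (s • (M + N)) c₀‖ ≤ C * s ^ n * ‖c₀‖)
    {τ : ℝ} (hτ₀ : 0 ≤ τ) (hτ₁ : τ ≤ 1) :
    ‖splittingStep M N c₀ v τ - exp (τ • (M + N)) c₀‖ ≤
      Real.exp ‖M‖ * ‖N‖ * C * τ ^ (n + 1) * ‖c₀‖ := by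
  set K := Real.exp ‖M‖ * ‖N‖ * C * ‖c₀‖
  have hK : 0 ≤ K := by positivity
  have hintegrand : ∀ s ∈ Ioc 0 τ,
      ‖exp ((τ - s) • M) (N (v s - exp (s • (M + N)) c₀))‖ ≤ K * s ^ n := by
    intro s ⟨hs₀, hsτ⟩
    have hr : |τ - s| ≤ 1 := by rw [abs_le]; constructor <;> linarith
    calc _ ≤ Real.exp ‖M‖ * ‖N (v s - exp (s • (M + N)) c₀)‖ := norm_exp_smul_apply_le M hr _
      _ ≤ Real.exp ‖M‖ * (‖N‖ * (C * s ^ n * ‖c₀‖)) := by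
        gcongr
        exact (N.le_opNorm _).trans (by gcongr; exact hvC s hs₀.le (hsτ.trans hτ₁))
      _ = K * s ^ n := by ring
  calc ‖splittingStep M N c₀ v τ - exp (τ • (M + N)) c₀‖
      = ‖∫ s in (0:ℝ)..τ, exp ((τ - s) • M) (N (v s - exp (s • (M + N)) c₀))‖ := by
        rw [← splittingStep_exp_smul_add τ, splittingStep_sub_splittingStep hv (by fun_prop)]
    _ ≤ K * (τ ^ (n + 1) / (n + 1)) := norm_integral_le_mul_pow hτ₀ hintegrand
    _ ≤ K * τ ^ (n + 1) := by
        gcongr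
        exact div_le_self (by positivity) (by linarith)
    _ = _ := by ring

end Splitting

/-- Consistency of the iterative operator-splitting scheme: the `i`-th iterate
satisfies `‖c_i(τ) − exp(τ(A+B))c₀‖ ≤ C_i τ^i ‖c₀‖` for `τ ∈ [0,1]`. -/
theorem iterative_splitting_order {X : Type*} [NormedAddCommGroup X]
    [NormedSpace ℝ X] [CompleteSpace X] (A B : X →L[ℝ] X) (c₀ : X)
    (D E : ℕ → (X →L[ℝ] X))
    (hD : ∀ i, D i = if Even i then B else A)
    (hE : ∀ i, E i = if Even i then A else B)
    (c : ℕ → ℝ → X)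
    (hc1 : ∀ t : ℝ, c 1 t = (NormedSpace.exp (t • A)) c₀)
    (hrec : ∀ i, 2 ≤ i → ∀ t : ℝ, c i t =
      (NormedSpace.exp (t • D i)) c₀ +
        ∫ s in (0:ℝ)..t, (NormedSpace.exp ((t - s) • D i)) ((E i) (c (i - 1) s))) :
    ∀ i, 1 ≤ i → ∃ C : ℝ, 0 ≤ C ∧ ∀ τ : ℝ, 0 ≤ τ → τ ≤ 1 →
      ‖c i τ - (NormedSpace.exp (τ • (A + B))) c₀‖ ≤ C * τ ^ i * ‖c₀‖ := by
  have hDE : ∀ i, D i + E i = A + B := fun i => by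
    rw [hD, hE]
    split_ifs
    exacts [add_comm B A, rfl]
  have hc_one : c 1 = splittingStep A B c₀ 0 := funext fun t => by simp [splittingStep, hc1]
  have hc_succ : ∀ i, 1 ≤ i → c (i + 1) = splittingStep (D (i + 1)) (E (i + 1)) c₀ (c i) :=
    fun i hi => funext (hrec (i + 1) (by omega))
  suffices H : ∀ i, 1 ≤ i → Continuous (c i) ∧ ∃ C : ℝ, 0 ≤ C ∧ ∀ τ : ℝ, 0 ≤ τ → τ ≤ 1 →
      ‖c i τ - exp (τ • (A + B)) c₀‖ ≤ C * τ ^ i * ‖c₀‖ from fun i hi => (H i hi).2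
  intro i hi
  induction i, hi using Nat.le_induction with
  | base =>
    rw [hc_one]
    refine ⟨continuous_splittingStep continuous_const, _, by positivity, fun τ =>
      norm_splittingStep_sub_exp_le (v := 0) (n := 0) continuous_const
        (Real.exp_nonneg ‖A + B‖) ?_⟩
    intro s hs₀ hs₁
    rw [Pi.zero_apply, zero_sub, norm_neg, pow_zero, mul_one]
    exact norm_exp_smul_apply_le (A + B) (abs_le.2 ⟨by linarith, hs₁⟩) c₀
  | succ i hi ih =>
    obtain ⟨hcont, C, hC, hbound⟩ := ih
    rw [← hDE (i + 1)] at hbound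
    rw [hc_succ i hi, ← hDE (i + 1)]
    exact ⟨continuous_splittingStep hcont, _, by positivity,
      fun τ => norm_splittingStep_sub_exp_le hcont hC hbound⟩
end
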